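/- Let H be a symmetric n×n matrix with ‖H‖ ≤ κ_H, g ∈ ℝⁿ, σ > 0, and m(u) = f + g·u + (1/2)u·H·u + (σ/3)‖u‖³. If u satisfies m(0) − m(u) ≥ (3/10)‖g‖ min{‖g‖/(1+‖H‖), √(‖g‖/σ)} and m(u) ≤ m(0), then ‖u‖ ≤ 3 max{κ_H/σ, √(‖g‖/σ)}. -/

import Mathlib

/-!
Comparing the model at `u` with its value at `0` and using Cauchy–Schwarz and `‖H‖ ≤ κ_H`
gives `(σ/3)‖u‖³ ≤ ‖g‖‖u‖ + (κ_H/2)‖u‖²`. With `M = max (κ_H/σ) (√(‖g‖/σ))` the right-hand side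
is at most `σ M² ‖u‖ + (σ/2) M ‖u‖²`, which is smaller than `(σ/3)‖u‖³` as soon as `‖u‖ > 3M`.
-/

open Matrix Real BigOperators RealInnerProductSpace

/-- Euclidean norm of a finite-dimensional real vector. -/
noncomputable def eunorm {ι : Type*} [Fintype ι] (x : ι → ℝ) : ℝ :=
  Real.sqrt (∑ i, x i ^ 2)

/-- ℓ¹ norm of a finite-dimensional real vector. -/
noncomputable def l1norm {ι : Type*} [Fintype ι] (x : ι → ℝ) : ℝ :=
  ∑ i, |x i|

/-- Spectral (ℓ²-operator) norm of a square matrix. -/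
noncomputable def opNorm {n : ℕ} (A : Matrix (Fin n) (Fin n) ℝ) : ℝ :=
  sSup {r : ℝ | ∃ x : Fin n → ℝ, eunorm x = 1 ∧ r = eunorm (A.mulVec x)}

section Eunorm

variable {ι : Type*} [Fintype ι]

lemma eunorm_nonneg (x : ι → ℝ) : 0 ≤ eunorm x :=
  Real.sqrt_nonneg _

@[simp]
lemma eunorm_zero : eunorm (0 : ι → ℝ) = 0 := by
  simp [eunorm]

@[simp]
lemma eunorm_neg (x : ι → ℝ) : eunorm (-x) = eunorm x := by
  simp [eunorm]

lemma dotProduct_le_eunorm_mul (x y : ι → ℝ) : x ⬝ᵥ y ≤ eunorm x * eunorm y := by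
  simpa [dotProduct, eunorm] using Real.sum_mul_le_sqrt_mul_sqrt Finset.univ x y

lemma neg_dotProduct_le_eunorm_mul (x y : ι → ℝ) : -(x ⬝ᵥ y) ≤ eunorm x * eunorm y := by
  simpa using dotProduct_le_eunorm_mul x (-y)

end Eunorm

lemma neg_dotProduct_mulVec_self_le {n : ℕ} {κ : ℝ} {H : Matrix (Fin n) (Fin n) ℝ}
    (hH : ∀ x : Fin n → ℝ, eunorm (H.mulVec x) ≤ κ * eunorm x) (u : Fin n → ℝ) :
    -(u ⬝ᵥ H.mulVec u) ≤ κ * eunorm u ^ 2 :=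
  calc -(u ⬝ᵥ H.mulVec u) ≤ eunorm u * eunorm (H.mulVec u) := neg_dotProduct_le_eunorm_mul _ _
    _ ≤ eunorm u * (κ * eunorm u) := mul_le_mul_of_nonneg_left (hH u) (eunorm_nonneg u)
    _ = κ * eunorm u ^ 2 := by ring

lemma cubic_le_of_cubicModel_le {n : ℕ} {f σ κ : ℝ} {g u : Fin n → ℝ}
    {H : Matrix (Fin n) (Fin n) ℝ} (hH : ∀ x : Fin n → ℝ, eunorm (H.mulVec x) ≤ κ * eunorm x)
    (hle : f + g ⬝ᵥ u + (1 / 2) * (u ⬝ᵥ H.mulVec u) + (σ / 3) * eunorm u ^ 3 ≤ f) :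
    (σ / 3) * eunorm u ^ 3 ≤ eunorm g * eunorm u + (κ / 2) * eunorm u ^ 2 := by
  have hlin := neg_dotProduct_le_eunorm_mul g u
  have hquad := neg_dotProduct_mulVec_self_le hH u
  linarith

lemma le_three_mul_max_of_cubic_le {σ κ G r : ℝ} (hσ : 0 < σ)
    (h : (σ / 3) * r ^ 3 ≤ G * r + (κ / 2) * r ^ 2) :
    r ≤ 3 * max (κ / σ) (√(G / σ)) := by
  set M := max (κ / σ) (√(G / σ))
  have hM : 0 ≤ M := (Real.sqrt_nonneg _).trans (le_max_right _ _)
  have hκ : κ ≤ σ * M := (div_le_iff₀' hσ).mp (le_max_left _ _)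
  have hG : G ≤ σ * M ^ 2 := by
    have hsq : G / σ ≤ √(G / σ) ^ 2 := by rw [Real.sq_sqrt']; exact le_max_left _ _
    have hM2 : √(G / σ) ^ 2 ≤ M ^ 2 := pow_le_pow_left₀ (Real.sqrt_nonneg _) (le_max_right _ _) 2
    exact (div_le_iff₀' hσ).mp (hsq.trans hM2)
  by_contra! hlt
  have hr : 0 < r := by linarith
  have hMr : M ≤ r / 3 := by linarith
  have hσr : 0 < σ * r ^ 3 := by positivity
  have : (σ / 3) * r ^ 3 ≤ (5 / 18) * (σ * r ^ 3) :=
    calc (σ / 3) * r ^ 3 ≤ G * r + (κ / 2) * r ^ 2 := h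
      _ ≤ σ * M ^ 2 * r + (σ * M / 2) * r ^ 2 := by gcongr
      _ ≤ σ * (r / 3) ^ 2 * r + (σ * (r / 3) / 2) * r ^ 2 := by gcongr
      _ = (5 / 18) * (σ * r ^ 3) := by ring
  linarith

theorem stmt12_general {n : ℕ} (f σ κH : ℝ) (g u : Fin n → ℝ) (H : Matrix (Fin n) (Fin n) ℝ)
    (hσ : 0 < σ)
    (hHbd : ∀ x : Fin n → ℝ, eunorm (H.mulVec x) ≤ κH * eunorm x)
    (m : (Fin n → ℝ) → ℝ)
    (hm : ∀ d, m d = f + g ⬝ᵥ d + (1 / 2) * (d ⬝ᵥ H.mulVec d) + (σ / 3) * (eunorm d) ^ 3)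
    (hle : m u ≤ m 0) :
    eunorm u ≤ 3 * max (κH / σ) (Real.sqrt (eunorm g / σ)) := by
  have hm0 : m 0 = f := by simp [hm]
  rw [hm u, hm0] at hle
  exact le_three_mul_max_of_cubic_le hσ (cubic_le_of_cubicModel_le hHbd hle)

theorem stmt12 {n : ℕ} (f σ κH : ℝ) (g u : Fin n → ℝ) (H : Matrix (Fin n) (Fin n) ℝ)
    (hH : H.IsSymm) (hσ : 0 < σ) (hκH : opNorm H ≤ κH)
    (hHbd : ∀ x : Fin n → ℝ, eunorm (H.mulVec x) ≤ κH * eunorm x)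
    (m : (Fin n → ℝ) → ℝ)
    (hm : ∀ d, m d = f + g ⬝ᵥ d + (1 / 2) * (d ⬝ᵥ H.mulVec d) + (σ / 3) * (eunorm d) ^ 3)
    (hdec : m 0 - m u ≥ (3 / 10) * eunorm g *
      min (eunorm g / (1 + opNorm H)) (Real.sqrt (eunorm g / σ)))
    (hle : m u ≤ m 0) :
    eunorm u ≤ 3 * max (κH / σ) (Real.sqrt (eunorm g / σ)) :=
  stmt12_general f σ κH g u H hσ hHbd m hm hle
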